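/- arXiv:2512.11370 — 8 statements merged into one kernel-verified Lean document; each statement's English description precedes it below -/
import Mathlib

section
/- Let ε > 0 and let y : [0,∞) → ℝ^N be locally absolutely continuous with ∫₀^∞ e^{-t/ε} |y'(t)|² dt < ∞. Then (1/2) ∫₀^∞ e^{-t/ε} |y(t)|² dt ≤ ε |y(0)|² + 2ε² ∫₀^∞ e^{-t/ε} |y'(t)|² dt. -/
/-!
Let `F t = ‖y 0‖ + ∫₀ᵗ ‖y'‖`, an absolutely continuous majorant of `‖y‖` with `F' = ‖y'‖`
almost everywhere. Integrating `(-ε e^{-t/ε} F²)' = e^{-t/ε} F² - 2ε e^{-t/ε} F F'` over `[0, T]`,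
dropping the nonpositive boundary term at `T` and using `2ε F F' ≤ F² / 2 + 2ε² F'²` gives
`(1/2) ∫₀ᵀ e^{-t/ε} F² ≤ ε F(0)² + 2ε² ∫₀ᵀ e^{-t/ε} F'²`; then let `T → ∞`.
-/

open MeasureTheory Real Set Filter

theorem hasDerivAt_exp_mul_sq {ε : ℝ} (hε : ε ≠ 0) {F : ℝ → ℝ} {φ t : ℝ}
    (hF : HasDerivAt F φ t) :
    HasDerivAt (fun s => -ε * rexp (-s / ε) * F s ^ 2)
      (rexp (-t / ε) * F t ^ 2 - 2 * ε * rexp (-t / ε) * F t * φ) t := by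
  have hw : HasDerivAt (fun s => rexp (-s / ε)) (rexp (-t / ε) * (-1 / ε)) t :=
    ((hasDerivAt_neg t).div_const ε).exp
  refine ((hw.const_mul (-ε)).fun_mul (hF.fun_pow 2)).congr_deriv ?_
  field_simp
  ring

theorem half_integral_exp_mul_sq_le {ε a b : ℝ} (hε : 0 < ε) (hab : a ≤ b) {F φ : ℝ → ℝ}
    (hF : AbsolutelyContinuousOnInterval F a b)
    (hφ : ∀ᵐ t, t ∈ Icc a b → HasDerivAt F (φ t) t)
    (hφ2 : IntervalIntegrable (fun t => rexp (-t / ε) * φ t ^ 2) volume a b) :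
    (1 / 2) * ∫ t in a..b, rexp (-t / ε) * F t ^ 2 ≤
      ε * rexp (-a / ε) * F a ^ 2 + 2 * ε ^ 2 * ∫ t in a..b, rexp (-t / ε) * φ t ^ 2 := by
  set h : ℝ → ℝ := fun s => -ε * rexp (-s / ε) * F s ^ 2
  have hw : AbsolutelyContinuousOnInterval (fun s => rexp (-s / ε)) a b :=
    ContDiffOn.absolutelyContinuousOnInterval (by fun_prop)
  have hh : AbsolutelyContinuousOnInterval h a b := by
    simpa only [h, sq, mul_assoc] using (hw.const_mul (-ε)).fun_mul (hF.fun_mul hF)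
  have hwF2 : IntervalIntegrable (fun t => rexp (-t / ε) * F t ^ 2) volume a b :=
    ((continuous_exp.comp (continuous_neg.div_const ε)).continuousOn.mul
      (hF.continuousOn.pow 2)).intervalIntegrable
  have hderiv_ge : ∀ᵐ t ∂volume.restrict (Icc a b),
      (1 / 2) * (rexp (-t / ε) * F t ^ 2) - 2 * ε ^ 2 * (rexp (-t / ε) * φ t ^ 2) ≤
        deriv h t := by
    rw [ae_restrict_iff' measurableSet_Icc]
    filter_upwards [hφ] with t ht htab
    rw [(hasDerivAt_exp_mul_sq hε.ne' (ht htab)).deriv]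
    nlinarith [mul_nonneg (exp_pos (-t / ε)).le (sq_nonneg (F t - 2 * ε * φ t))]
  have hhb : h b ≤ 0 := by
    have : 0 ≤ ε * rexp (-b / ε) * F b ^ 2 := by positivity
    simp only [h]
    linarith
  have := intervalIntegral.integral_mono_ae_restrict hab
    ((hwF2.const_mul _).sub (hφ2.const_mul _)) hh.intervalIntegrable_deriv hderiv_ge
  rw [hh.integral_deriv_eq_sub,
    intervalIntegral.integral_sub (hwF2.const_mul _) (hφ2.const_mul _),
    intervalIntegral.integral_const_mul, intervalIntegral.integral_const_mul] at this
  simp only [h] at this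
  linarith

theorem setIntegral_Ioi_le_of_intervalIntegral_le {f : ℝ → ℝ} {a C : ℝ}
    (hf_nonneg : ∀ t, a < t → 0 ≤ f t) (hf : ∀ T, a ≤ T → IntervalIntegrable f volume a T)
    (hC : ∀ T, a ≤ T → ∫ t in a..T, f t ≤ C) :
    ∫ t in Ioi a, f t ≤ C := by
  have hfi : ∀ T, IntegrableOn f (Ioc a T) := by
    intro T
    rcases le_total a T with h | h
    · exact (hf T h).1
    · simp [Ioc_eq_empty_of_le h]
  have hnorm : ∀ T, a ≤ T → ∫ t in a..T, ‖f t‖ = ∫ t in a..T, f t := fun T hT =>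
    intervalIntegral.integral_congr_ae (Eventually.of_forall fun t ht =>
      Real.norm_of_nonneg (hf_nonneg t (by rw [uIoc_of_le hT] at ht; exact ht.1)))
  have hint : IntegrableOn f (Ioi a) :=
    integrableOn_Ioi_of_intervalIntegral_norm_bounded C a hfi tendsto_id
      ((eventually_ge_atTop a).mono fun T hT => (hnorm T hT).trans_le (hC T hT))
  exact le_of_tendsto (intervalIntegral_tendsto_integral_Ioi a hint tendsto_id)
    ((eventually_ge_atTop a).mono hC)

section Primitive

variable {E : Type*} [NormedAddCommGroup E] [NormedSpace ℝ E] {y y' : ℝ → E} {a b : ℝ}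

theorem continuousOn_of_eq_add_integral (hab : a ≤ b) (hy' : IntervalIntegrable y' volume a b)
    (hy : ∀ t ∈ Icc a b, y t = y a + ∫ s in a..t, y' s) : ContinuousOn y (Icc a b) := by
  rw [← uIcc_of_le hab] at hy ⊢
  exact (continuousOn_const.add (intervalIntegral.continuousOn_primitive_interval (μ := volume)
    ((intervalIntegrable_iff' (f := y') (μ := volume)).1 hy'))).congr hy

theorem intervalIntegrable_exp_mul_norm_sq (ε : ℝ) (hab : a ≤ b)
    (hy' : IntervalIntegrable y' volume a b)
    (hy : ∀ t ∈ Icc a b, y t = y a + ∫ s in a..t, y' s) :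
    IntervalIntegrable (fun t => rexp (-t / ε) * ‖y t‖ ^ 2) volume a b :=
  ((continuous_exp.comp (continuous_neg.div_const ε)).continuousOn.mul
    ((continuousOn_of_eq_add_integral hab hy' hy).norm.pow 2)).intervalIntegrable_of_Icc hab

theorem half_integral_exp_mul_norm_sq_le {ε : ℝ} (hε : 0 < ε) (hab : a ≤ b)
    (hy' : IntervalIntegrable y' volume a b)
    (hy : ∀ t ∈ Icc a b, y t = y a + ∫ s in a..t, y' s)
    (hy'2 : IntervalIntegrable (fun t => rexp (-t / ε) * ‖y' t‖ ^ 2) volume a b) :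
    (1 / 2) * ∫ t in a..b, rexp (-t / ε) * ‖y t‖ ^ 2 ≤
      ε * rexp (-a / ε) * ‖y a‖ ^ 2 +
        2 * ε ^ 2 * ∫ t in a..b, rexp (-t / ε) * ‖y' t‖ ^ 2 := by
  set F : ℝ → ℝ := fun t => ‖y a‖ + ∫ s in a..t, ‖y' s‖
  have hF : AbsolutelyContinuousOnInterval F a b :=
    contDiffOn_const.absolutelyContinuousOnInterval.add
      (hy'.norm.absolutelyContinuousOnInterval_intervalIntegral left_mem_uIcc)
  have hF' : ∀ᵐ t, t ∈ Icc a b → HasDerivAt F ‖y' t‖ t := by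
    filter_upwards [hy'.norm.ae_hasDerivAt_integral] with t ht htab
    rw [← uIcc_of_le hab] at htab
    exact (ht htab a left_mem_uIcc).const_add _
  have hyF : ∀ t ∈ Icc a b, ‖y t‖ ≤ F t := fun t ht => by
    rw [hy t ht]
    exact (norm_add_le _ _).trans
      (add_le_add_right (intervalIntegral.norm_integral_le_integral_norm ht.1) _)
  have hFa : F a = ‖y a‖ := by simp [F]
  have hmono : ∫ t in a..b, rexp (-t / ε) * ‖y t‖ ^ 2 ≤
      ∫ t in a..b, rexp (-t / ε) * F t ^ 2 :=
    intervalIntegral.integral_mono_on hab (intervalIntegrable_exp_mul_norm_sq ε hab hy' hy)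
      ((continuous_exp.comp (continuous_neg.div_const ε)).continuousOn.mul
        (hF.continuousOn.pow 2)).intervalIntegrable
      fun t ht => mul_le_mul_of_nonneg_left (pow_le_pow_left₀ (norm_nonneg _) (hyF t ht) 2)
        (exp_pos _).le
  have := half_integral_exp_mul_sq_le hε hab hF hF' hy'2
  rw [hFa] at this
  linarith

end Primitive

/-- Weighted energy estimate for functions in the weighted Sobolev space `W_ε`:
if `y` is locally absolutely continuous on `[0,∞)` (expressed by the fundamental
theorem of calculus with a locally integrable derivative `y'`) and the derivative
is square integrable against the weight `e^{-t/ε}`, then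
`(1/2)∫₀^∞ e^{-t/ε}|y|² ≤ ε|y(0)|² + 2ε²∫₀^∞ e^{-t/ε}|y'|²`. -/
theorem stmt0 (N : ℕ) (ε : ℝ) (hε : 0 < ε)
    (y y' : ℝ → EuclideanSpace ℝ (Fin N))
    (hint : ∀ t ∈ Set.Ici (0 : ℝ), IntervalIntegrable y' volume 0 t)
    (hy : ∀ t ∈ Set.Ici (0 : ℝ), y t = y 0 + ∫ s in (0 : ℝ)..t, y' s)
    (hL2 : IntegrableOn (fun t => Real.exp (-t / ε) * ‖y' t‖ ^ 2) (Set.Ioi (0 : ℝ)) volume) :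
    (1 / 2) * ∫ t in Set.Ioi (0 : ℝ), Real.exp (-t / ε) * ‖y t‖ ^ 2 ≤
      ε * ‖y 0‖ ^ 2 + 2 * ε ^ 2 * ∫ t in Set.Ioi (0 : ℝ), Real.exp (-t / ε) * ‖y' t‖ ^ 2 := by
  set A := ∫ t in Ioi (0 : ℝ), rexp (-t / ε) * ‖y' t‖ ^ 2
  have htrunc : ∀ T, 0 ≤ T → ∫ t in (0 : ℝ)..T, rexp (-t / ε) * ‖y t‖ ^ 2 ≤
      2 * ε * ‖y 0‖ ^ 2 + 4 * ε ^ 2 * A := by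
    intro T hT
    have hL2T := hL2.mono_set (Ioc_subset_Ioi_self : Ioc (0 : ℝ) T ⊆ Ioi 0)
    have hA : ∫ t in (0 : ℝ)..T, rexp (-t / ε) * ‖y' t‖ ^ 2 ≤ A := by
      rw [intervalIntegral.integral_of_le hT]
      exact setIntegral_mono_set hL2 (Eventually.of_forall fun t => by positivity)
        Ioc_subset_Ioi_self.eventuallyLE
    have := half_integral_exp_mul_norm_sq_le hε hT (hint T hT) (fun t ht => hy t ht.1)
      ((intervalIntegrable_iff_integrableOn_Ioc_of_le hT).2 hL2T)
    simp only [neg_zero, zero_div, exp_zero, mul_one] at this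
    linarith [mul_le_mul_of_nonneg_left hA (sq_nonneg ε)]
  have := setIntegral_Ioi_le_of_intervalIntegral_le (fun t _ => by positivity)
    (fun T hT => intervalIntegrable_exp_mul_norm_sq ε hT (hint T hT) fun t ht => hy t ht.1)
    htrunc
  linarith
end

section
/- Let T ∈ (0,∞) and g ∈ L¹(0,T). For ε > 0 define G_ε(t) := e^{t/ε} ∫_t^T e^{-s/ε} |g(s)| ds for t ∈ [0,T]. Then sup_{t ∈ [0,T]} G_ε(t) → 0 as ε → 0. -/
/-!
For `s ≥ t` the kernel `e^{(t-s)/ε}` is at most `1`, and at most `e^{-r/ε}` once `s ≥ t + r`.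
Hence `G_ε(t) ≤ ∫_t^{t+r} |g| + e^{-r/ε} ‖g‖₁`. The primitive of `|g|` is uniformly continuous
on the compact interval `[0,T]`, so a single `r` makes the first term small for every `t`,
and then the second term is small for all small `ε`.
-/

open MeasureTheory Real Set Filter Topology

theorem exists_pos_abs_intervalIntegral_le_of_dist_le {f : ℝ → ℝ} {a b : ℝ}
    (hf : IntegrableOn f (Icc a b)) {η : ℝ} (hη : 0 < η) :
    ∃ r > 0, ∀ t ∈ Icc a b, ∀ u ∈ Icc a b, dist t u ≤ r → |∫ s in t..u, f s| ≤ η := by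
  rcases le_total a b with hab | hba
  · rw [← uIcc_of_le hab] at hf ⊢
    have hF := isCompact_uIcc.uniformContinuousOn_of_continuous
      (intervalIntegral.continuousOn_primitive_interval hf)
    obtain ⟨δ, hδ, hF⟩ := Metric.uniformContinuousOn_iff.1 hF η hη
    refine ⟨δ / 2, half_pos hδ, fun t ht u hu htu => ?_⟩
    have hint : ∀ x ∈ uIcc a b, IntervalIntegrable f volume a x := fun x hx =>
      (hf.mono_set (uIcc_subset_uIcc_left hx)).intervalIntegrable
    rw [← intervalIntegral.integral_interval_sub_left (hint u hu) (hint t ht), ← Real.dist_eq,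
      dist_comm]
    exact (hF t ht u hu (by linarith)).le
  · refine ⟨1, one_pos, fun t ht u hu _ => ?_⟩
    obtain rfl : t = u := by linarith [ht.1, ht.2, hu.1, hu.2]
    simpa using hη.le

theorem tendsto_exp_neg_div_nhdsGT_zero {r : ℝ} (hr : 0 < r) :
    Tendsto (fun ε : ℝ => exp (-r / ε)) (𝓝[>] 0) (𝓝 0) := by
  have h : Tendsto (fun ε : ℝ => -r / ε) (𝓝[>] 0) atBot := by
    simpa only [div_eq_mul_inv] using
      tendsto_inv_nhdsGT_zero.const_mul_atTop_of_neg (neg_lt_zero.2 hr)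
  exact tendsto_exp_atBot.comp h

theorem exp_div_mul_exp_neg_div_le_one {t s ε : ℝ} (hε : 0 < ε) (hts : t ≤ s) :
    exp (t / ε) * exp (-s / ε) ≤ 1 := by
  rw [← exp_add, exp_le_one_iff, ← add_div]
  exact div_nonpos_of_nonpos_of_nonneg (by linarith) hε.le

theorem exp_div_mul_exp_neg_div_le_exp {t s ε r : ℝ} (hε : 0 < ε) (hts : t + r ≤ s) :
    exp (t / ε) * exp (-s / ε) ≤ exp (-r / ε) := by
  rw [← exp_add, exp_le_exp, ← add_div]
  exact div_le_div_of_nonneg_right (by linarith) hε.le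

theorem exp_mul_integral_exp_mul_le {f : ℝ → ℝ} (hf0 : 0 ≤ f) {t b ε r : ℝ} (hε : 0 < ε)
    (hr : 0 ≤ r) (htb : t ≤ b) (hf : IntegrableOn f (Icc t b)) :
    exp (t / ε) * ∫ s in t..b, exp (-s / ε) * f s ≤
      (∫ s in t..min (t + r) b, f s) + exp (-r / ε) * ∫ s in t..b, f s := by
  set m := min (t + r) b
  have htm : t ≤ m := le_min (by linarith) htb
  have hmb : m ≤ b := min_le_right _ _
  have hsub : uIcc t m ⊆ uIcc t b ∧ uIcc m b ⊆ uIcc t b := by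
    simp only [uIcc_of_le htm, uIcc_of_le hmb, uIcc_of_le htb]
    exact ⟨Icc_subset_Icc_right hmb, Icc_subset_Icc_left htm⟩
  have hint : IntervalIntegrable f volume t b := (uIcc_of_le htb ▸ hf).intervalIntegrable
  have hint_exp : IntervalIntegrable (fun s => exp (t / ε) * (exp (-s / ε) * f s)) volume t b :=
    (hint.continuousOn_mul (by fun_prop)).const_mul _
  calc exp (t / ε) * ∫ s in t..b, exp (-s / ε) * f s
      = ∫ s in t..b, exp (t / ε) * (exp (-s / ε) * f s) :=
        (intervalIntegral.integral_const_mul _ _).symm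
    _ = (∫ s in t..m, exp (t / ε) * (exp (-s / ε) * f s)) +
          ∫ s in m..b, exp (t / ε) * (exp (-s / ε) * f s) :=
        (intervalIntegral.integral_add_adjacent_intervals (hint_exp.mono_set hsub.1)
          (hint_exp.mono_set hsub.2)).symm
    _ ≤ (∫ s in t..m, f s) + ∫ s in m..b, exp (-r / ε) * f s := by
      gcongr ?_ + ?_
      · refine intervalIntegral.integral_mono_on_of_le_Ioo htm (hint_exp.mono_set hsub.1)
          (hint.mono_set hsub.1) fun s hs => ?_
        rw [← mul_assoc]
        exact mul_le_of_le_one_left (hf0 s) (exp_div_mul_exp_neg_div_le_one hε hs.1.le)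
      · refine intervalIntegral.integral_mono_on_of_le_Ioo hmb (hint_exp.mono_set hsub.2)
          ((hint.mono_set hsub.2).const_mul _) fun s hs => ?_
        have hrs : t + r ≤ s :=
          (min_lt_iff.1 hs.1).elim le_of_lt fun hbs => absurd hs.2 hbs.not_gt
        rw [← mul_assoc]
        exact mul_le_mul_of_nonneg_right (exp_div_mul_exp_neg_div_le_exp hε hrs) (hf0 s)
    _ ≤ (∫ s in t..m, f s) + exp (-r / ε) * ∫ s in t..b, f s := by
      rw [intervalIntegral.integral_const_mul]
      gcongr
      exact intervalIntegral.integral_mono_interval htm hmb le_rfl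
        (Eventually.of_forall hf0) hint

theorem exp_mul_integral_exp_mul_le_of_dist_le {f : ℝ → ℝ} (hf0 : 0 ≤ f) {a b η r ε : ℝ}
    (hf : IntegrableOn f (Icc a b)) (hε : 0 < ε) (hr : 0 ≤ r)
    (hsmall : ∀ t ∈ Icc a b, ∀ u ∈ Icc a b, dist t u ≤ r → |∫ s in t..u, f s| ≤ η)
    {t : ℝ} (ht : t ∈ Icc a b) :
    exp (t / ε) * ∫ s in t..b, exp (-s / ε) * f s ≤ η + exp (-r / ε) * ∫ s in Ioc a b, f s := by
  obtain ⟨hat, htb⟩ := ht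
  set m := min (t + r) b
  have hm : m ∈ Icc a b := ⟨hat.trans (le_min (by linarith) htb), min_le_right _ _⟩
  have htm : dist t m ≤ r := by
    rw [dist_comm, Real.dist_eq, abs_of_nonneg (by simp [m, htb, hr])]
    linarith [min_le_left (t + r) b]
  calc _ ≤ (∫ s in t..m, f s) + exp (-r / ε) * ∫ s in t..b, f s :=
        exp_mul_integral_exp_mul_le hf0 hε hr htb (hf.mono_set (Icc_subset_Icc_left hat))
    _ ≤ η + exp (-r / ε) * ∫ s in Ioc a b, f s := by
      gcongr
      · exact (le_abs_self _).trans (hsmall t ⟨hat, htb⟩ m hm htm)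
      · rw [intervalIntegral.integral_of_le htb]
        exact setIntegral_mono_set (hf.mono_set Ioc_subset_Icc_self) (Eventually.of_forall hf0)
          (Ioc_subset_Ioc_left hat).eventuallyLE

theorem stmt1_general (T : ℝ) (g : ℝ → ℝ)
    (hg : IntegrableOn g (Set.Ioo 0 T) volume) :
    Filter.Tendsto
      (fun ε : ℝ =>
        sSup ((fun t : ℝ => Real.exp (t / ε) * ∫ s in t..T, Real.exp (-s / ε) * |g s|) ''
          Set.Icc 0 T))
      (nhdsWithin 0 (Set.Ioi 0)) (nhds 0) := by
  have hf : IntegrableOn (fun s => |g s|) (Icc 0 T) :=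
    ((integrableOn_Icc_iff_integrableOn_Ioo).2 hg).abs
  refine tendsto_order.2 ⟨fun a ha => Eventually.of_forall fun ε => ?_, fun η hη => ?_⟩
  · refine ha.trans_le (Real.sSup_nonneg ?_)
    rintro _ ⟨t, ht, rfl⟩
    exact mul_nonneg (exp_pos _).le (intervalIntegral.integral_nonneg ht.2 fun s _ =>
      mul_nonneg (exp_pos _).le (abs_nonneg _))
  obtain ⟨r, hr, hsmall⟩ := exists_pos_abs_intervalIntegral_le_of_dist_le hf (half_pos hη)
  set M := ∫ s in Ioc 0 T, |g s|
  have htail : ∀ᶠ ε in 𝓝[>] 0, exp (-r / ε) * M < η / 2 :=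
    ((tendsto_exp_neg_div_nhdsGT_zero hr).mul_const M).eventually_lt_const
      (by simpa using half_pos hη)
  filter_upwards [htail, self_mem_nhdsWithin] with ε hε hε0
  calc _ ≤ η / 2 + exp (-r / ε) * M := by
        refine Real.sSup_le ?_ (by positivity)
        rintro _ ⟨t, ht, rfl⟩
        exact exp_mul_integral_exp_mul_le_of_dist_le (fun s => abs_nonneg (g s)) hf hε0 hr.le
          hsmall ht
    _ < η := by linarith

/-- Lemma (tech): for `g ∈ L¹(0,T)`, the functions
`G_ε(t) = e^{t/ε} ∫_t^T e^{-s/ε}|g(s)| ds` converge to `0` uniformly on `[0,T]`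
as `ε → 0⁺`, i.e. their sup over `[0,T]` tends to `0`. -/
theorem stmt1 (T : ℝ) (hT : 0 < T) (g : ℝ → ℝ)
    (hg : IntegrableOn g (Set.Ioo 0 T) volume) :
    Filter.Tendsto
      (fun ε : ℝ =>
        sSup ((fun t : ℝ => Real.exp (t / ε) * ∫ s in t..T, Real.exp (-s / ε) * |g s|) ''
          Set.Icc 0 T))
      (nhdsWithin 0 (Set.Ioi 0)) (nhds 0) :=
  stmt1_general T g hg
end

section
/- Let A ∈ ℝ^{N×N} and ε > 0, and define the block matrix A_ε ∈ ℝ^{2N×2N} with blocks (0, I_N; (1/ε)A, (1/ε)I_N). Then λ ∈ ℂ is an eigenvalue of A_ε if and only if λ(ελ − 1) is an eigenvalue of A. -/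
/-!
The block `-1` of `λ • 1 - A_ε` is invertible and commutes with everything, so
`det (λ • 1 - A_ε) = det (λ (λ - ε⁻¹) • 1 - ε⁻¹ • A) = ε⁻ᴺ · det (λ (ελ - 1) • 1 - A)`,
and `ε⁻ᴺ ≠ 0`.
-/

open Matrix Polynomial

section

variable {n R : Type*} [DecidableEq n] [Fintype n] [CommRing R]

theorem Matrix.det_fromBlocks_neg_one₁₂ (A C D : Matrix n n R) :
    (fromBlocks A (-1) C D).det = (C + D * A).det := by
  -- clearing the top-left block leaves the symplectic form `J` (of determinant 1) times a
  -- block-triangular matrix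
  have h : fromBlocks A (-1) C D * fromBlocks 1 0 A 1 = J n R * fromBlocks (C + D * A) D 0 1 := by
    simp [J, fromBlocks_multiply]
  simpa [det_mul, det_fromBlocks_zero₂₁, SymplecticGroup.det_eq_one (SymplecticGroup.J_mem n R)]
    using congrArg det h

theorem Matrix.eval_charpoly_fromBlocks_zero_one (B : Matrix n n R) (d t : R) :
    (fromBlocks 0 1 B (d • 1)).charpoly.eval t = B.charpoly.eval (t * (t - d)) := by
  have h : scalar (n ⊕ n) t - fromBlocks 0 1 B (d • 1) =
      fromBlocks (scalar n t) (-1) (-B) (scalar n (t - d)) := by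
    ext (i | i) (j | j) <;> simp [one_apply, diagonal_apply, ite_sub_ite]
  rw [eval_charpoly, eval_charpoly, h, det_fromBlocks_neg_one₁₂, neg_add_eq_sub, ← map_mul,
    mul_comm t]

theorem Matrix.eval_charpoly_smul (B : Matrix n n R) (c t : R) :
    (c • B).charpoly.eval (c * t) = c ^ Fintype.card n * B.charpoly.eval t := by
  rw [eval_charpoly, eval_charpoly, ← det_smul, smul_sub, map_mul, scalar_apply c,
    ← smul_eq_diagonal_mul]

end

/-- For the block matrix `A_ε = (0, I; (1/ε)A, (1/ε)I)`, a complex number `λ` is an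
eigenvalue of `A_ε` (a root of its characteristic polynomial) iff `λ(ελ − 1)` is an
eigenvalue of `A`. -/
theorem stmt2 (N : ℕ) (A : Matrix (Fin N) (Fin N) ℝ) (ε : ℝ) (hε : 0 < ε)
    (Aeps : Matrix (Fin N ⊕ Fin N) (Fin N ⊕ Fin N) ℝ)
    (hAeps : Aeps = Matrix.fromBlocks 0 1 ((1 / ε) • A) ((1 / ε) • (1 : Matrix (Fin N) (Fin N) ℝ))) :
    ∀ lam : ℂ,
      ((Aeps.map (algebraMap ℝ ℂ)).charpoly.IsRoot lam ↔
        (A.map (algebraMap ℝ ℂ)).charpoly.IsRoot (lam * ((ε : ℂ) * lam - 1))) := by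
  intro lam
  have hε' : (ε : ℂ) ≠ 0 := Complex.ofReal_ne_zero.mpr hε.ne'
  have hmap : Aeps.map (algebraMap ℝ ℂ) =
      fromBlocks 0 1 ((ε : ℂ)⁻¹ • A.map (algebraMap ℝ ℂ)) ((ε : ℂ)⁻¹ • 1) := by
    subst hAeps
    simp [fromBlocks_map, Matrix.map_smul, ← Complex.ofReal_inv, Complex.coe_smul]
  have hroot : lam * (lam - (ε : ℂ)⁻¹) = (ε : ℂ)⁻¹ * (lam * ((ε : ℂ) * lam - 1)) := by
    field_simp
  rw [IsRoot, IsRoot, hmap, eval_charpoly_fromBlocks_zero_one, hroot, eval_charpoly_smul,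
    mul_eq_zero_iff_left (pow_ne_zero _ (inv_ne_zero hε'))]
end

section
/- Let μ ∈ ℝ and ε > 0 with 1 + 4εμ > 0, and set λ_ε := (1 − √(1+4εμ))/(2ε). Then |λ_ε| ≤ √(|μ|/ε), −λ_ε ≤ μ, and if additionally μ ≥ K for some K ≤ 0 and 4ε|K| ≤ 1/2, then λ_ε ≤ −2K. -/
/-! With `x = 4εμ` we have `λ_ε = (1 - √(1 + x)) / (2ε)`, so the three bounds reduce to
`(1 - √(1 + x))² ≤ |x|`, to Bernoulli's `√(1 + x) ≤ 1 + x / 2`, and to `y ≤ √y` for `y ≤ 1`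
applied to `y = 1 + 4εK ≤ 1 + x`. -/

open Real

namespace Real

theorem one_sub_sqrt_one_add_sq_le_abs {x : ℝ} (hx : -1 ≤ x) : (1 - √(1 + x)) ^ 2 ≤ |x| := by
  have hsq : √(1 + x) ^ 2 = 1 + x := sq_sqrt (by linarith)
  rcases le_or_gt 0 x with hx0 | hx0
  · have : 1 ≤ √(1 + x) := one_le_sqrt.2 (by linarith)
    rw [abs_of_nonneg hx0]
    nlinarith
  · have : 1 + x ≤ √(1 + x) := le_sqrt_self_iff.2 (by linarith)
    rw [abs_of_neg hx0]
    nlinarith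

end Real

/-- Estimates for the smaller root `λ_ε = (1 − √(1+4εμ))/(2ε)` of `−ελ² + λ + μ`:
`|λ_ε| ≤ √(|μ|/ε)`, `−λ_ε ≤ μ`, and if `μ ≥ K` with `K ≤ 0` and `4ε|K| ≤ 1/2` then
`λ_ε ≤ −2K`. -/
theorem stmt6 (μ ε : ℝ) (hε : 0 < ε) (hpos : 0 < 1 + 4 * ε * μ)
    (lam : ℝ) (hlam : lam = (1 - Real.sqrt (1 + 4 * ε * μ)) / (2 * ε)) :
    |lam| ≤ Real.sqrt (|μ| / ε) ∧ -lam ≤ μ ∧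
      ∀ K : ℝ, K ≤ 0 → μ ≥ K → 4 * ε * |K| ≤ 1 / 2 → lam ≤ -2 * K := by
  have hx : -1 ≤ 4 * ε * μ := by linarith
  refine ⟨?_, ?_, fun K hK hKμ _ => ?_⟩
  · rw [← sqrt_sq_eq_abs]
    refine sqrt_le_sqrt ?_
    calc lam ^ 2 = (1 - √(1 + 4 * ε * μ)) ^ 2 / (2 * ε) ^ 2 := by rw [hlam, div_pow]
      _ ≤ |4 * ε * μ| / (2 * ε) ^ 2 := by gcongr; exact one_sub_sqrt_one_add_sq_le_abs hx
      _ = |μ| / ε := by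
        rw [abs_mul, abs_of_pos (by positivity : (0 : ℝ) < 4 * ε)]
        field_simp
        ring
  · rw [hlam, neg_div', div_le_iff₀ (by positivity)]
    linarith [sqrt_one_add_le hx]
  · have hK_le_sqrt : 1 + 4 * ε * K ≤ √(1 + 4 * ε * μ) :=
      (le_sqrt_self_iff.2 (by nlinarith)).trans (sqrt_le_sqrt (by nlinarith))
    calc lam ≤ (1 - (1 + 4 * ε * K)) / (2 * ε) := by rw [hlam]; gcongr
      _ = -2 * K := by field_simp; ring
end

section
/- Let K ≤ 0, T > 0, μ ≥ K, and f ∈ L²(0,T) real-valued. Then sup_{t ∈ [0,T]} (1+|μ|) |∫₀^t e^{μ(s−t)} f(s) ds|² ≤ (1−K)(T+1) e^{−2KT} ∫₀^T |f(s)|² ds. -/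
/-!
By Cauchy–Schwarz, `|∫₀^t e^{μ(s-t)} f s ds|² ≤ (∫₀^t e^{2μ(s-t)} ds) ∫₀^t f²`, so it suffices
to bound the kernel integral `A = ∫₀^t e^{2μ(s-t)} ds`. Since `μ ≥ K` and `s - t ∈ [-T, 0]`, the
integrand is at most `e^{-2KT}`, so `A ≤ t e^{-2KT}`; and `μ A = (1 - e^{-2μt}) / 2 ≤ 1 / 2`.
For `μ ≥ 0` these give `(1 + μ) A ≤ t e^{-2KT} + 1/2`, for `μ < 0` they give
`(1 - μ) A ≤ (1 - K) t e^{-2KT}`.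
-/

open MeasureTheory Set Real

theorem sq_integral_mul_le_integral_sq_mul_integral_sq {α : Type*} [MeasurableSpace α]
    {ν : Measure α} {f g : α → ℝ} (hf : MemLp f 2 ν) (hg : MemLp g 2 ν) :
    (∫ a, f a * g a ∂ν) ^ 2 ≤ (∫ a, f a ^ 2 ∂ν) * ∫ a, g a ^ 2 ∂ν := by
  have holder := integral_mul_norm_le_Lp_mul_Lq HolderConjugate.two_two
    (by simpa using hf) (by simpa using hg)
  simp only [norm_eq_abs, rpow_two, sq_abs, ← sqrt_eq_rpow] at holder
  calc (∫ a, f a * g a ∂ν) ^ 2 ≤ (∫ a, |f a| * |g a| ∂ν) ^ 2 := by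
        rw [← sq_abs]
        gcongr
        exact abs_integral_le_integral_abs.trans_eq
          (integral_congr_ae (.of_forall fun a ↦ abs_mul (f a) (g a)))
    _ ≤ (√(∫ a, f a ^ 2 ∂ν) * √(∫ a, g a ^ 2 ∂ν)) ^ 2 := by gcongr
    _ = (∫ a, f a ^ 2 ∂ν) * ∫ a, g a ^ 2 ∂ν := by
        rw [mul_pow, sq_sqrt (integral_nonneg fun _ ↦ sq_nonneg _),
          sq_sqrt (integral_nonneg fun _ ↦ sq_nonneg _)]

theorem sq_intervalIntegral_mul_le {a b : ℝ} (hab : a ≤ b) {g f : ℝ → ℝ} (hg : Continuous g)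
    (hg0 : ∀ x, g x ≠ 0) (hf : IntegrableOn (fun x ↦ f x ^ 2) (Ioc a b)) :
    (∫ x in a..b, g x * f x) ^ 2 ≤ (∫ x in a..b, g x ^ 2) * ∫ x in a..b, f x ^ 2 := by
  -- `hf` only makes `f ^ 2` measurable; `f = g⁻¹ * (g * f)` is measurable once `g * f` is
  -- integrable, and otherwise the left-hand side is `0` by convention.
  by_cases hgf : IntervalIntegrable (fun x ↦ g x * f x) volume a b
  · have hf_meas : AEStronglyMeasurable f (volume.restrict (Ioc a b)) := by
      refine (((hg.inv₀ hg0).aestronglyMeasurable).mul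
        ((intervalIntegrable_iff_integrableOn_Ioc_of_le hab).mp hgf).1).congr
        (.of_forall fun x ↦ ?_)
      simp [hg0 x]
    simp only [intervalIntegral.integral_of_le hab]
    exact sq_integral_mul_le_integral_sq_mul_integral_sq
      ((memLp_two_iff_integrable_sq hg.aestronglyMeasurable).mpr (hg.pow 2).integrableOn_Ioc)
      ((memLp_two_iff_integrable_sq hf_meas).mpr hf)
  · rw [intervalIntegral.integral_undef hgf, zero_pow two_ne_zero]
    exact mul_nonneg (intervalIntegral.integral_nonneg hab fun _ _ ↦ sq_nonneg _)
      (intervalIntegral.integral_nonneg hab fun _ _ ↦ sq_nonneg _)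

theorem integral_mul_exp_sq (μ t : ℝ) :
    ∫ s in (0 : ℝ)..t, μ * exp (μ * (s - t)) ^ 2 = (1 - exp (-(μ * t)) ^ 2) / 2 := by
  have hderiv (s : ℝ) : HasDerivAt (fun s ↦ exp (μ * (s - t)) ^ 2 / 2)
      (μ * exp (μ * (s - t)) ^ 2) s :=
    ((((hasDerivAt_id' s).sub_const t).const_mul μ).exp.fun_pow 2).div_const 2 |>.congr_deriv
      (by norm_num; ring)
  rw [intervalIntegral.integral_eq_sub_of_hasDerivAt (fun s _ ↦ hderiv s)
    (by apply Continuous.intervalIntegrable; fun_prop)]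
  rw [sub_self, mul_zero, exp_zero, zero_sub, mul_neg]
  ring

theorem mul_integral_exp_sq_le_half (μ t : ℝ) :
    μ * ∫ s in (0 : ℝ)..t, exp (μ * (s - t)) ^ 2 ≤ 1 / 2 := by
  rw [← intervalIntegral.integral_const_mul, integral_mul_exp_sq]
  linarith [sq_nonneg (exp (-(μ * t)))]

theorem integral_exp_sq_le {K μ t T : ℝ} (hK : K ≤ 0) (hμ : K ≤ μ) (ht0 : 0 ≤ t) (htT : t ≤ T) :
    ∫ s in (0 : ℝ)..t, exp (μ * (s - t)) ^ 2 ≤ t * exp (-2 * K * T) := by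
  have hbound : ∀ s ∈ Icc 0 t, exp (μ * (s - t)) ^ 2 ≤ exp (-2 * K * T) := by
    rintro s ⟨hs0, hst⟩
    rw [← exp_nat_mul, exp_le_exp]
    push_cast
    nlinarith
  simpa [ht0] using intervalIntegral.integral_mono_on ht0
    (by apply Continuous.intervalIntegrable; fun_prop) (intervalIntegrable_const (μ := volume))
    hbound

theorem one_add_abs_mul_integral_exp_sq_le {K μ t T : ℝ} (hK : K ≤ 0) (hμ : K ≤ μ)
    (ht0 : 0 ≤ t) (htT : t ≤ T) :
    (1 + |μ|) * ∫ s in (0 : ℝ)..t, exp (μ * (s - t)) ^ 2 ≤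
      (1 - K) * (T + 1) * exp (-2 * K * T) := by
  set A := ∫ s in (0 : ℝ)..t, exp (μ * (s - t)) ^ 2
  have hA0 : 0 ≤ A := intervalIntegral.integral_nonneg ht0 fun _ _ ↦ sq_nonneg _
  have hAt : A ≤ t * exp (-2 * K * T) := integral_exp_sq_le hK hμ ht0 htT
  have hμA : μ * A ≤ 1 / 2 := mul_integral_exp_sq_le_half μ t
  have hE : 1 ≤ exp (-2 * K * T) := one_le_exp (by nlinarith)
  have hET : 0 ≤ (T + 1 - t) * exp (-2 * K * T) := mul_nonneg (by linarith) (by linarith)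
  rcases abs_cases μ with ⟨hμabs, -⟩ | ⟨hμabs, -⟩ <;> rw [hμabs]
  · nlinarith [mul_nonneg (neg_nonneg.mpr hK) (by linarith : 0 ≤ (T + 1) * exp (-2 * K * T))]
  · nlinarith [mul_nonneg (sub_nonneg.mpr hμ) hA0, mul_nonneg (by linarith : 0 ≤ 1 - K) hET]

theorem stmt10_general (K μ T : ℝ) (hK : K ≤ 0) (hμ : K ≤ μ)
    (f : ℝ → ℝ) (hf : IntegrableOn (fun s => f s ^ 2) (Set.Ioc 0 T) volume) :
    ∀ t ∈ Set.Icc (0 : ℝ) T,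
      (1 + |μ|) * |∫ s in (0 : ℝ)..t, Real.exp (μ * (s - t)) * f s| ^ 2 ≤
        (1 - K) * (T + 1) * Real.exp (-2 * K * T) * ∫ s in (0 : ℝ)..T, |f s| ^ 2 := by
  rintro t ⟨ht0, htT⟩
  have cauchy_schwarz := sq_intervalIntegral_mul_le ht0 (g := fun s ↦ exp (μ * (s - t)))
    (by fun_prop) (fun _ ↦ exp_ne_zero _) (hf.mono_set (Ioc_subset_Ioc_right htT))
  have hf_mono : ∫ s in (0 : ℝ)..t, f s ^ 2 ≤ ∫ s in (0 : ℝ)..T, |f s| ^ 2 := by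
    simp only [sq_abs]
    exact intervalIntegral.integral_mono_interval le_rfl ht0 htT
      (.of_forall fun _ ↦ sq_nonneg _) ((intervalIntegrable_iff_integrableOn_Ioc_of_le
        (ht0.trans htT)).mpr hf)
  calc (1 + |μ|) * |∫ s in (0 : ℝ)..t, exp (μ * (s - t)) * f s| ^ 2
      ≤ (1 + |μ|) *
          ((∫ s in (0 : ℝ)..t, exp (μ * (s - t)) ^ 2) * ∫ s in (0 : ℝ)..t, f s ^ 2) := by
        rw [sq_abs]
        exact mul_le_mul_of_nonneg_left cauchy_schwarz (by positivity)
    _ = ((1 + |μ|) * ∫ s in (0 : ℝ)..t, exp (μ * (s - t)) ^ 2) *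
          ∫ s in (0 : ℝ)..t, f s ^ 2 := by
        ring
    _ ≤ (1 - K) * (T + 1) * exp (-2 * K * T) * ∫ s in (0 : ℝ)..T, |f s| ^ 2 :=
        mul_le_mul (one_add_abs_mul_integral_exp_sq_le hK hμ ht0 htT) hf_mono
          (intervalIntegral.integral_nonneg ht0 fun _ _ ↦ sq_nonneg _)
          (mul_nonneg (mul_nonneg (by linarith) (by linarith)) (exp_pos _).le)

/-- Estimate (firstdominant), scalar form: for `K ≤ 0`, `T > 0`, `μ ≥ K` and
`f ∈ L²(0,T)`,
`sup_{t∈[0,T]} (1+|μ|)|∫₀^t e^{μ(s−t)} f(s) ds|² ≤ (1−K)(T+1)e^{−2KT}∫₀^T |f|²`. -/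
theorem stmt10 (K μ T : ℝ) (hK : K ≤ 0) (hT : 0 < T) (hμ : K ≤ μ)
    (f : ℝ → ℝ) (hf : IntegrableOn (fun s => f s ^ 2) (Set.Ioc 0 T) volume) :
    ∀ t ∈ Set.Icc (0 : ℝ) T,
      (1 + |μ|) * |∫ s in (0 : ℝ)..t, Real.exp (μ * (s - t)) * f s| ^ 2 ≤
        (1 - K) * (T + 1) * Real.exp (-2 * K * T) * ∫ s in (0 : ℝ)..T, |f s| ^ 2 :=
  stmt10_general K μ T hK hμ f hf
end

section
/- Let ε > 0, μ_ε ≥ 1/(2ε), and let g : (0,∞) → ℝ be measurable with ∫₀^∞ e^{−s/(2ε)} |g(s)|² ds < ∞. Define x̄(t) := e^{μ_ε t} ∫_t^∞ e^{−μ_ε s} g(s) ds. Then ∫₀^∞ e^{−t/ε} |x̄(t)|² dt ≤ (2ε/μ_ε) ∫₀^∞ e^{−s/(2ε)} |g(s)|² ds. -/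
/-!
With `a = 1/(2ε)`, split `e^{-μs} g(s) = e^{-(2μ-a)s/2} · e^{-as/2} g(s)`; Cauchy–Schwarz
on `(t, ∞)` gives the pointwise bound
`e^{-2at} x̄(t)² ≤ e^{-at}/(2μ-a) · ∫_t^∞ e^{-as} g(s)² ds`.
Integrating over `t > 0` produces the constant `1/(a(2μ-a)) ≤ 1/(aμ) = 2ε/μ`,
since `μ ≥ a`.
-/

open MeasureTheory Set Real ENNReal

theorem ENNReal.lintegral_mul_sq_le {α : Type*} [MeasurableSpace α] (μ : Measure α)
    {f g : α → ℝ≥0∞} (hf : AEMeasurable f μ) (hg : AEMeasurable g μ) :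
    (∫⁻ a, f a * g a ∂μ) ^ 2 ≤ (∫⁻ a, f a ^ 2 ∂μ) * ∫⁻ a, g a ^ 2 ∂μ := by
  have h := ENNReal.lintegral_mul_le_Lp_mul_Lq μ .two_two hf hg
  simp only [ENNReal.rpow_two, Pi.mul_apply, one_div] at h
  set F := ∫⁻ a, f a ^ 2 ∂μ
  set G := ∫⁻ a, g a ^ 2 ∂μ
  calc (∫⁻ a, f a * g a ∂μ) ^ 2
      ≤ (F ^ (2 : ℝ)⁻¹ * G ^ (2 : ℝ)⁻¹) ^ (2 : ℝ) := by
        rw [ENNReal.rpow_two]; gcongr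
    _ = F * G := by
        rw [ENNReal.mul_rpow_of_nonneg _ _ zero_le_two, ENNReal.rpow_inv_rpow two_ne_zero,
          ENNReal.rpow_inv_rpow two_ne_zero]

theorem lintegral_exp_mul_Ioi {a : ℝ} (ha : a < 0) (c : ℝ) :
    ∫⁻ x in Ioi c, ENNReal.ofReal (exp (a * x)) = ENNReal.ofReal (-exp (a * c) / a) := by
  rw [← ofReal_integral_eq_lintegral_ofReal (integrableOn_exp_mul_Ioi ha c)
    (ae_of_all _ fun _ ↦ (exp_pos _).le), integral_exp_mul_Ioi ha]

theorem ofReal_sq_integral_exp_mul_Ioi_le {a μ : ℝ} (haμ : a < 2 * μ) {g : ℝ → ℝ}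
    (hg : Measurable g) (t : ℝ) :
    ENNReal.ofReal ((∫ s in Ioi t, exp (-μ * s) * g s) ^ 2) ≤
      ENNReal.ofReal (exp (-(2 * μ - a) * t) / (2 * μ - a)) *
        ∫⁻ s in Ioi t, ENNReal.ofReal (exp (-a * s) * g s ^ 2) := by
  have hsplit : ∀ s, ‖exp (-μ * s) * g s‖ₑ =
      ENNReal.ofReal (exp (-(2 * μ - a) / 2 * s)) * ENNReal.ofReal (exp (-a / 2 * s) * |g s|) := by
    intro s
    rw [← ENNReal.ofReal_mul (exp_pos _).le, ← mul_assoc, ← exp_add, ← ofReal_norm,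
      norm_mul, norm_of_nonneg (exp_pos _).le, norm_eq_abs]
    ring_nf
  have hsq_left : ∀ s, ENNReal.ofReal (exp (-(2 * μ - a) / 2 * s)) ^ 2 =
      ENNReal.ofReal (exp (-(2 * μ - a) * s)) := by
    intro s
    rw [← ENNReal.ofReal_pow (exp_pos _).le, ← exp_nat_mul]
    ring_nf
  have hsq_right : ∀ s, ENNReal.ofReal (exp (-a / 2 * s) * |g s|) ^ 2 =
      ENNReal.ofReal (exp (-a * s) * g s ^ 2) := by
    intro s
    rw [← ENNReal.ofReal_pow (by positivity), mul_pow, sq_abs, ← exp_nat_mul]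
    ring_nf
  calc ENNReal.ofReal ((∫ s in Ioi t, exp (-μ * s) * g s) ^ 2)
      = ‖∫ s in Ioi t, exp (-μ * s) * g s‖ₑ ^ 2 := by
        rw [← sq_abs, ENNReal.ofReal_pow (abs_nonneg _), ← norm_eq_abs, ofReal_norm]
    _ ≤ (∫⁻ s in Ioi t, ‖exp (-μ * s) * g s‖ₑ) ^ 2 := by
        gcongr; exact enorm_integral_le_lintegral_enorm _
    _ ≤ (∫⁻ s in Ioi t, ENNReal.ofReal (exp (-(2 * μ - a) * s))) *
          ∫⁻ s in Ioi t, ENNReal.ofReal (exp (-a * s) * g s ^ 2) := by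
        simp only [hsplit, ← hsq_left, ← hsq_right]
        exact ENNReal.lintegral_mul_sq_le _ (by fun_prop) (by fun_prop)
    _ = _ := by
        rw [lintegral_exp_mul_Ioi (by linarith)]
        congr 2
        rw [neg_div_neg_eq]

theorem ofReal_exp_mul_sq_tail_le {a μ : ℝ} (haμ : a < 2 * μ) {g : ℝ → ℝ}
    (hg : Measurable g) (t : ℝ) :
    ENNReal.ofReal
        (exp (-(2 * a) * t) * (exp (μ * t) * ∫ s in Ioi t, exp (-μ * s) * g s) ^ 2) ≤
      ENNReal.ofReal (exp (-a * t)) * ENNReal.ofReal (2 * μ - a)⁻¹ *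
        ∫⁻ s in Ioi t, ENNReal.ofReal (exp (-a * s) * g s ^ 2) := by
  have hweight :
      exp (-(2 * a) * t) * exp (μ * t) ^ 2 * exp (-(2 * μ - a) * t) = exp (-a * t) := by
    rw [← exp_nat_mul, ← exp_add, ← exp_add]; ring_nf
  calc _
      = ENNReal.ofReal (exp (-(2 * a) * t) * exp (μ * t) ^ 2) *
          ENNReal.ofReal ((∫ s in Ioi t, exp (-μ * s) * g s) ^ 2) := by
        rw [← ENNReal.ofReal_mul (by positivity), mul_pow, mul_assoc]
    _ ≤ ENNReal.ofReal (exp (-(2 * a) * t) * exp (μ * t) ^ 2) *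
          (ENNReal.ofReal (exp (-(2 * μ - a) * t) / (2 * μ - a)) *
            ∫⁻ s in Ioi t, ENNReal.ofReal (exp (-a * s) * g s ^ 2)) := by
        gcongr; exact ofReal_sq_integral_exp_mul_Ioi_le haμ hg t
    _ = _ := by
        rw [← mul_assoc, ← ENNReal.ofReal_mul (by positivity), div_eq_mul_inv, ← mul_assoc,
          hweight, ENNReal.ofReal_mul (exp_pos _).le]

/-- The particular solution `x̄(t) = e^{μ_ε t}∫_t^∞ e^{−μ_ε s} g(s) ds` of
`x' = μ_ε x + g` has finite weighted energy:
`∫₀^∞ e^{−t/ε}|x̄(t)|² dt ≤ (2ε/μ_ε)∫₀^∞ e^{−s/(2ε)}|g(s)|² ds`. -/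
theorem stmt11 (ε με : ℝ) (hε : 0 < ε) (hμε : 1 / (2 * ε) ≤ με)
    (g : ℝ → ℝ) (hmeas : Measurable g)
    (hg : ∫⁻ s in Set.Ioi (0 : ℝ),
        ENNReal.ofReal (Real.exp (-s / (2 * ε)) * g s ^ 2) < ⊤)
    (xb : ℝ → ℝ)
    (hxb : ∀ t, xb t = Real.exp (με * t) * ∫ s in Set.Ioi t, Real.exp (-με * s) * g s) :
    ∫⁻ t in Set.Ioi (0 : ℝ), ENNReal.ofReal (Real.exp (-t / ε) * xb t ^ 2) ≤
      ENNReal.ofReal ((2 * ε / με) *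
        ∫ s in Set.Ioi (0 : ℝ), Real.exp (-s / (2 * ε)) * g s ^ 2) := by
  set a := 1 / (2 * ε) with ha_def
  have ha : 0 < a := by positivity
  have hμ : 0 < με := ha.trans_le hμε
  have hexp_t : ∀ t, -t / ε = -(2 * a) * t := fun t ↦ by rw [ha_def]; field_simp
  have hexp_s : ∀ s, -s / (2 * ε) = -a * s := fun s ↦ by rw [ha_def]; field_simp
  simp only [hexp_t, hexp_s] at hg ⊢
  set I := ∫⁻ s in Ioi 0, ENNReal.ofReal (exp (-a * s) * g s ^ 2)
  have hconst : ENNReal.ofReal a⁻¹ * ENNReal.ofReal (2 * με - a)⁻¹ ≤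
      ENNReal.ofReal (2 * ε / με) := by
    rw [← ENNReal.ofReal_mul (by positivity)]
    refine ENNReal.ofReal_le_ofReal ?_
    calc a⁻¹ * (2 * με - a)⁻¹ ≤ a⁻¹ * με⁻¹ := by gcongr; linarith
      _ = 2 * ε / με := by rw [ha_def]; field_simp
  have hpoint : ∀ t ∈ Ioi (0 : ℝ), ENNReal.ofReal (exp (-(2 * a) * t) * xb t ^ 2) ≤
      ENNReal.ofReal (exp (-a * t)) * (ENNReal.ofReal (2 * με - a)⁻¹ * I) := by
    intro t ht
    rw [hxb, ← mul_assoc]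
    refine (ofReal_exp_mul_sq_tail_le (by linarith) hmeas t).trans ?_
    gcongr
    exact lintegral_mono_set (Ioi_subset_Ioi (le_of_lt ht))
  calc ∫⁻ t in Ioi 0, ENNReal.ofReal (exp (-(2 * a) * t) * xb t ^ 2)
      ≤ ∫⁻ t in Ioi 0,
          ENNReal.ofReal (exp (-a * t)) * (ENNReal.ofReal (2 * με - a)⁻¹ * I) :=
        setLIntegral_mono' measurableSet_Ioi hpoint
    _ = ENNReal.ofReal a⁻¹ * ENNReal.ofReal (2 * με - a)⁻¹ * I := by
        rw [lintegral_mul_const _ (by fun_prop), lintegral_exp_mul_Ioi (by linarith), mul_assoc]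
        simp
    _ ≤ ENNReal.ofReal (2 * ε / με) * I := by gcongr
    _ = _ := by
        rw [integral_eq_lintegral_of_nonneg_ae (ae_of_all _ fun _ ↦ by positivity) (by fun_prop),
          ENNReal.ofReal_mul (by positivity), ENNReal.ofReal_toReal hg.ne]
end

section
/- Let ε > 0, μ ∈ ℝ with 1+4εμ ≥ 1/2, Z := √(1+4εμ), λ_ε := (1−Z)/(2ε), μ_ε := (1+Z)/(2ε), and let f̂ : (0,∞) → ℝ satisfy ∫₀^∞ e^{−s/(2ε)}|f̂(s)|² ds < ∞. A solution v of −εv'' + v' + μv = f̂ (in the general-solution form with constants c₁, c₂) satisfies ∫₀^∞ e^{−t/ε}|v(t)|² dt < ∞ only if c₂ = (1/Z) ∫₀^∞ e^{−μ_ε s} f̂(s) ds. -/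
/-!
Multiply the general solution by `e^{-μ_ε t}`. By AM–GM against the weight `e^{-s/(2ε)}`,
`e^{-λ_ε s} f̂` is locally integrable with `∫₀^t` growing at most like `e^{(2Z-1)t/(2ε)}`, while
`e^{-μ_ε s} f̂` is integrable on `(0, ∞)`. Hence `e^{-μ_ε t} v(t)` tends to
`c₂ - (1/Z) ∫₀^∞ e^{-μ_ε s} f̂`, and if this limit were nonzero, `e^{-t/(2ε)} |v(t)|` would grow
like `e^{Zt/(2ε)}`, contradicting finite energy.
-/

open MeasureTheory Set Filter Topology

lemma abs_exp_mul_le (a β s x : ℝ) :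
    |Real.exp (-β * s) * x| ≤ (Real.exp (-a * s) * x ^ 2 + Real.exp ((a - 2 * β) * s)) / 2 := by
  have hu : Real.exp (-a * s / 2) ^ 2 = Real.exp (-a * s) := by
    rw [← Real.exp_nat_mul]; congr 1; ring
  have hv : Real.exp ((a / 2 - β) * s) ^ 2 = Real.exp ((a - 2 * β) * s) := by
    rw [← Real.exp_nat_mul]; congr 1; ring
  have huv : Real.exp (-a * s / 2) * Real.exp ((a / 2 - β) * s) = Real.exp (-β * s) := by
    rw [← Real.exp_add]; congr 1; ring
  rw [abs_mul, Real.abs_exp, ← huv, ← hu, ← hv, ← sq_abs x]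
  nlinarith [sq_nonneg (Real.exp (-a * s / 2) * |x| - Real.exp ((a / 2 - β) * s))]

lemma tendsto_exp_neg_mul_atTop_nhds_zero {b : ℝ} (hb : 0 < b) :
    Tendsto (fun t => Real.exp (-b * t)) atTop (𝓝 0) :=
  Real.tendsto_exp_atBot.comp (tendsto_id.const_mul_atTop_of_neg (neg_neg_of_pos hb))

section WeightedSquareIntegrable

variable {a β : ℝ} {f : ℝ → ℝ}

lemma integrableOn_exp_mul_Ioi_of_sq (hf : AEStronglyMeasurable f (volume.restrict (Ioi 0)))
    (hg : IntegrableOn (fun s => Real.exp (-a * s) * f s ^ 2) (Ioi 0)) (hβ : a < 2 * β) :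
    IntegrableOn (fun s => Real.exp (-β * s) * f s) (Ioi 0) := by
  refine Integrable.mono' ((hg.add (exp_neg_integrableOn_Ioi 0 (sub_pos.mpr hβ))).div_const 2)
    ((by fun_prop : Continuous fun s => Real.exp (-β * s)).aestronglyMeasurable.mul hf)
    (ae_of_all _ fun s => ?_)
  simpa only [Real.norm_eq_abs, neg_sub, Pi.add_apply] using abs_exp_mul_le a β s (f s)

lemma abs_intervalIntegral_exp_mul_le
    (hg : IntegrableOn (fun s => Real.exp (-a * s) * f s ^ 2) (Ioi 0)) (hc : 0 < a - 2 * β)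
    {t : ℝ} (ht : 0 ≤ t) :
    |∫ s in (0 : ℝ)..t, Real.exp (-β * s) * f s| ≤
      ((∫ s in Ioi 0, Real.exp (-a * s) * f s ^ 2) +
        Real.exp ((a - 2 * β) * t) / (a - 2 * β)) / 2 := by
  have hexp : IntegrableOn (fun s => Real.exp ((a - 2 * β) * s)) (Ioc 0 t) :=
    (by fun_prop : Continuous fun s => Real.exp ((a - 2 * β) * s)).integrableOn_Icc.mono_set
      Ioc_subset_Icc_self
  have hgt := hg.mono_set (Ioc_subset_Ioi_self : Ioc (0 : ℝ) t ⊆ Ioi 0)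
  have hbound : IntervalIntegrable
      (fun s => (Real.exp (-a * s) * f s ^ 2 + Real.exp ((a - 2 * β) * s)) / 2) volume 0 t :=
    (intervalIntegrable_iff_integrableOn_Ioc_of_le ht).mpr ((hgt.add hexp).div_const 2)
  calc |∫ s in (0 : ℝ)..t, Real.exp (-β * s) * f s|
      ≤ ∫ s in (0 : ℝ)..t, (Real.exp (-a * s) * f s ^ 2 + Real.exp ((a - 2 * β) * s)) / 2 :=
        (Real.norm_eq_abs _).symm.trans_le <| intervalIntegral.norm_integral_le_of_norm_le ht
          (ae_of_all _ fun s _ => abs_exp_mul_le a β s (f s)) hbound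
    _ = ((∫ s in Ioc 0 t, Real.exp (-a * s) * f s ^ 2) +
          ∫ s in Ioc 0 t, Real.exp ((a - 2 * β) * s)) / 2 := by
        rw [intervalIntegral.integral_of_le ht, integral_div, integral_add hgt hexp]
    _ ≤ _ := by
        rw [← integral_exp_mul_Iic hc]
        gcongr ?_ / 2
        exact add_le_add
          (setIntegral_mono_set hg (ae_of_all _ fun s => by positivity)
            Ioc_subset_Ioi_self.eventuallyLE)
          (setIntegral_mono_set (integrableOn_exp_mul_Iic hc t)
            (ae_of_all _ fun s => by positivity) Ioc_subset_Iic_self.eventuallyLE)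

lemma tendsto_exp_neg_mul_intervalIntegral_exp_mul
    (hg : IntegrableOn (fun s => Real.exp (-a * s) * f s ^ 2) (Ioi 0)) (hc : 0 < a - 2 * β)
    {γ : ℝ} (hγ : a - 2 * β < γ) :
    Tendsto (fun t => Real.exp (-γ * t) * ∫ s in (0 : ℝ)..t, Real.exp (-β * s) * f s)
      atTop (𝓝 0) := by
  set c := a - 2 * β
  set M := ∫ s in Ioi 0, Real.exp (-a * s) * f s ^ 2
  refine squeeze_zero_norm'
    (a := fun t => (M * Real.exp (-γ * t) + Real.exp (-(γ - c) * t) / c) / 2) ?_ ?_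
  · filter_upwards [eventually_ge_atTop 0] with t ht
    have hexp : Real.exp (-γ * t) * Real.exp (c * t) = Real.exp (-(γ - c) * t) := by
      rw [← Real.exp_add]; congr 1; ring
    calc ‖Real.exp (-γ * t) * ∫ s in (0 : ℝ)..t, Real.exp (-β * s) * f s‖
        = Real.exp (-γ * t) * |∫ s in (0 : ℝ)..t, Real.exp (-β * s) * f s| := by
          rw [Real.norm_eq_abs, abs_mul, Real.abs_exp]
      _ ≤ Real.exp (-γ * t) * ((M + Real.exp (c * t) / c) / 2) := by
          gcongr; exact abs_intervalIntegral_exp_mul_le hg hc ht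
      _ = _ := by rw [← hexp]; ring
  · simpa using (((tendsto_exp_neg_mul_atTop_nhds_zero (hc.trans hγ)).const_mul M).add
      ((tendsto_exp_neg_mul_atTop_nhds_zero (sub_pos.mpr hγ)).div_const c)).div_const 2

end WeightedSquareIntegrable

lemma tendsto_sq_exp_mul_atTop {κ δ : ℝ} {x : ℝ → ℝ} (hκ : 0 < κ) (hδ : δ ≠ 0)
    (hx : Tendsto x atTop (𝓝 δ)) :
    Tendsto (fun t => (Real.exp (κ * t) * x t) ^ 2) atTop atTop := by
  simp_rw [mul_pow]
  exact ((tendsto_pow_atTop two_ne_zero).comp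
    (Real.tendsto_exp_atTop.comp (tendsto_id.const_mul_atTop hκ))).atTop_mul_pos
    (by positivity) (hx.pow 2)

lemma setLIntegral_Ioi_ofReal_eq_top {h : ℝ → ℝ} (a : ℝ) (hh : Tendsto h atTop atTop) :
    ∫⁻ t in Ioi a, ENNReal.ofReal (h t) = ⊤ := by
  obtain ⟨T, hT⟩ := eventually_atTop.mp (hh.eventually_ge_atTop 1)
  refine top_le_iff.mp ?_
  calc (⊤ : ENNReal) = ∫⁻ _ in Ioi (max a T), 1 := by simp
    _ ≤ ∫⁻ t in Ioi (max a T), ENNReal.ofReal (h t) :=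
        setLIntegral_mono' measurableSet_Ioi fun t ht =>
          ENNReal.one_le_ofReal.mpr (hT t (le_of_max_le_right ht.le))
    _ ≤ ∫⁻ t in Ioi a, ENNReal.ofReal (h t) :=
        lintegral_mono_set (Ioi_subset_Ioi (le_max_left a T))

lemma eq_zero_of_tendsto_exp_neg_mul_of_lintegral_lt_top {a m δ : ℝ} {v : ℝ → ℝ} (ham : a < m)
    (hv : Tendsto (fun t => Real.exp (-m * t) * v t) atTop (𝓝 δ))
    (hfin : ∫⁻ t in Ioi 0, ENNReal.ofReal (Real.exp (-(2 * a) * t) * v t ^ 2) < ⊤) :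
    δ = 0 := by
  by_contra hδ
  refine (setLIntegral_Ioi_ofReal_eq_top 0 ((tendsto_sq_exp_mul_atTop (sub_pos.mpr ham) hδ
    hv).congr fun t => ?_)).not_lt hfin
  rw [← mul_assoc, ← Real.exp_add, mul_pow, ← Real.exp_nat_mul]
  congr 2
  ring

lemma exp_neg_mul_mul_add_exp_mul (l m t P Q : ℝ) :
    Real.exp (-m * t) * (Real.exp (l * t) * P + Real.exp (m * t) * Q) =
      Real.exp (-(m - l) * t) * P + Q := by
  rw [mul_add, ← mul_assoc, ← mul_assoc, ← Real.exp_add, ← Real.exp_add, neg_mul,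
    neg_add_cancel, Real.exp_zero, one_mul]
  congr 3
  ring

/-- Selection of the finite-energy solution: if `v` is in the general-solution form
with constants `c₁, c₂` and has finite weighted energy `∫₀^∞ e^{−t/ε}|v|² < ∞`,
then necessarily `c₂ = (1/Z)∫₀^∞ e^{−μ_ε s} f̂(s) ds`. -/
theorem stmt17 (ε μ : ℝ) (hε : 0 < ε) (hpos : 1 / 2 ≤ 1 + 4 * ε * μ)
    (Z lam με : ℝ) (hZ : Z = Real.sqrt (1 + 4 * ε * μ))
    (hlam : lam = (1 - Z) / (2 * ε)) (hμε : με = (1 + Z) / (2 * ε))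
    (f : ℝ → ℝ) (hmeas : Measurable f)
    (hf : ∫⁻ s in Set.Ioi (0 : ℝ),
        ENNReal.ofReal (Real.exp (-s / (2 * ε)) * f s ^ 2) < ⊤)
    (c₁ c₂ : ℝ) (v : ℝ → ℝ)
    (hv : ∀ t, v t =
      Real.exp (lam * t) * (c₁ + (1 / Z) * ∫ s in (0 : ℝ)..t, Real.exp (-lam * s) * f s) +
        Real.exp (με * t) * (c₂ - (1 / Z) * ∫ s in (0 : ℝ)..t, Real.exp (-με * s) * f s))
    (hfin : ∫⁻ t in Set.Ioi (0 : ℝ),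
        ENNReal.ofReal (Real.exp (-t / ε) * v t ^ 2) < ⊤) :
    c₂ = (1 / Z) * ∫ s in Set.Ioi (0 : ℝ), Real.exp (-με * s) * f s := by
  have hZ_half : 1 / 2 < Z := hZ ▸ (Real.lt_sqrt (by norm_num)).mpr (by linarith)
  have hg : IntegrableOn (fun s => Real.exp (-(1 / (2 * ε)) * s) * f s ^ 2) (Ioi 0) := by
    refine ⟨by fun_prop,
      (hasFiniteIntegral_iff_ofReal (ae_of_all _ fun s => by positivity)).mpr ?_⟩
    convert hf using 6; ring
  have hsmall : Tendsto (fun t => Real.exp (-(με - lam) * t) *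
      (c₁ + (1 / Z) * ∫ s in (0 : ℝ)..t, Real.exp (-lam * s) * f s)) atTop (𝓝 0) := by
    have hc : 0 < 1 / (2 * ε) - 2 * lam := by rw [hlam]; field_simp; linarith
    have hγ : 1 / (2 * ε) - 2 * lam < με - lam := by rw [hlam, hμε]; field_simp; linarith
    have := ((tendsto_exp_neg_mul_atTop_nhds_zero (hc.trans hγ)).mul_const c₁).add
        ((tendsto_exp_neg_mul_intervalIntegral_exp_mul hg hc hγ).const_mul (1 / Z))
    rw [zero_mul, mul_zero, add_zero] at this
    exact this.congr fun t => by ring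
  have hμ_int : IntegrableOn (fun s => Real.exp (-με * s) * f s) (Ioi 0) :=
    integrableOn_exp_mul_Ioi_of_sq hmeas.aestronglyMeasurable hg
      (by rw [hμε]; field_simp; linarith)
  have hlim : Tendsto (fun t => Real.exp (-με * t) * v t) atTop
      (𝓝 (c₂ - (1 / Z) * ∫ s in Ioi 0, Real.exp (-με * s) * f s)) := by
    refine (zero_add (_ : ℝ) ▸ hsmall.add (tendsto_const_nhds.sub
      ((intervalIntegral_tendsto_integral_Ioi 0 hμ_int tendsto_id).const_mul _))).congr fun t => ?_
    rw [hv, exp_neg_mul_mul_add_exp_mul]; rfl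
  refine sub_eq_zero.mp (eq_zero_of_tendsto_exp_neg_mul_of_lintegral_lt_top
    (a := 1 / (2 * ε)) (by rw [hμε]; field_simp; linarith) hlim ?_)
  convert hfin using 6
  field_simp
end

section
/- Let K ≤ 0, T > 0, ε > 0 with 4ε|K| < 1/2, and let μ ≥ K with Z := √(1+4εμ), λ_ε := (1−Z)/(2ε). Then sup_{t∈[0,T]} ((1+|μ|)/Z²) ∫₀^t e^{2λ_ε(t−s)} ds ≤ 2(1−K)(T+1) e^{−4KT}. -/
open MeasureTheory Set

/-!
For `μ ≤ 0` the rate `λ_ε` lies in `[0, -2K]`, so the kernel `e^{2λ_ε(t-s)}` is bounded by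
`e^{-4Kt}`, while `|μ| ≤ -K` and `Z² ≥ 1 + 4εK > 1/2` bound the prefactor by `2(1 - K)`.
For `μ > 0` the rate is negative and the prefactor may be large, but then
`-2λ_ε ∫₀^t e^{2λ_ε(t-s)} ds = 1 - e^{2λ_ε t} ≤ 1` and `μ ≤ -λ_ε Z²`, so the `μ`-part of the
prefactor contributes at most `1/2`, and the rest at most `t`.
-/

lemma integral_exp_mul_sub_eq (a t : ℝ) (ha : a ≠ 0) :
    ∫ s in (0 : ℝ)..t, Real.exp (a * (t - s)) = (Real.exp (a * t) - 1) / a := by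
  rw [intervalIntegral.integral_comp_sub_left (fun x => Real.exp (a * x)) t, sub_self, sub_zero,
    intervalIntegral.integral_comp_mul_left Real.exp ha, mul_zero, integral_exp, Real.exp_zero,
    smul_eq_mul]
  field_simp

lemma neg_mul_integral_exp_mul_sub (a t : ℝ) :
    -a * ∫ s in (0 : ℝ)..t, Real.exp (a * (t - s)) = 1 - Real.exp (a * t) := by
  rcases eq_or_ne a 0 with rfl | ha
  · simp
  · rw [integral_exp_mul_sub_eq a t ha]
    field_simp
    ring

lemma integral_exp_mul_sub_le {a b t : ℝ} (hb : 0 ≤ b) (hab : a ≤ b) (ht : 0 ≤ t) :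
    ∫ s in (0 : ℝ)..t, Real.exp (a * (t - s)) ≤ t * Real.exp (b * t) := by
  calc ∫ s in (0 : ℝ)..t, Real.exp (a * (t - s))
      ≤ ∫ _ in (0 : ℝ)..t, Real.exp (b * t) := by
        refine intervalIntegral.integral_mono_on ht
          (Continuous.intervalIntegrable (by fun_prop) _ _) intervalIntegrable_const ?_
        rintro s ⟨hs0, hst⟩
        exact Real.exp_le_exp.2 (by nlinarith)
    _ = t * Real.exp (b * t) := by simp

lemma one_sub_div_le_neg_two_mul {K ε μ Z : ℝ} (hK : K ≤ 0) (hε : 0 < ε) (hμ : K ≤ μ)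
    (hZ0 : 0 ≤ Z) (hZ2 : Z ^ 2 = 1 + 4 * ε * μ) :
    (1 - Z) / (2 * ε) ≤ -2 * K := by
  have hZ : 1 + 4 * ε * K ≤ Z := by
    by_contra! h
    have hc1 : 1 + 4 * ε * K ≤ 1 := by nlinarith
    nlinarith [mul_le_mul_of_nonneg_left hμ hε.le, mul_le_mul_of_nonneg_left h.le hZ0,
      mul_le_mul_of_nonneg_left hc1 (hZ0.trans h.le)]
  rw [div_le_iff₀ (by positivity)]
  linarith

lemma le_sq_mul_sub_one_div {ε μ Z : ℝ} (hε : 0 < ε) (hZ1 : 1 ≤ Z)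
    (hZ2 : Z ^ 2 = 1 + 4 * ε * μ) :
    μ ≤ Z ^ 2 * ((Z - 1) / (2 * ε)) := by
  rw [mul_div_assoc', le_div_iff₀ (by positivity)]
  nlinarith [mul_nonneg (sub_nonneg.2 hZ1) (sub_nonneg.2 hZ1)]

lemma kernel_estimate_of_nonpos {K ε μ Z t : ℝ} (hK : K ≤ 0) (hε : 0 < ε)
    (hsmall : 4 * ε * |K| < 1 / 2) (hμ : K ≤ μ) (hμ0 : μ ≤ 0) (hZ0 : 0 ≤ Z)
    (hZ2 : Z ^ 2 = 1 + 4 * ε * μ) (ht : 0 ≤ t) :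
    ((1 + |μ|) / Z ^ 2) * ∫ s in (0 : ℝ)..t, Real.exp (2 * ((1 - Z) / (2 * ε)) * (t - s)) ≤
      2 * (1 - K) * (t * Real.exp (-4 * K * t)) := by
  rw [abs_of_nonpos hK] at hsmall
  have hlam : (1 - Z) / (2 * ε) ≤ -2 * K :=
    one_sub_div_le_neg_two_mul hK hε hμ hZ0 hZ2
  have hZ2half : 1 / 2 ≤ Z ^ 2 := by nlinarith [mul_le_mul_of_nonneg_left hμ hε.le]
  have hcoef : (1 + |μ|) / Z ^ 2 ≤ 2 * (1 - K) := by
    rw [div_le_iff₀ (by linarith), abs_of_nonpos hμ0]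
    nlinarith
  refine mul_le_mul hcoef ?_ ?_ (by linarith)
  · exact integral_exp_mul_sub_le (by linarith) (by linarith) ht
  · exact intervalIntegral.integral_nonneg ht fun s _ => (Real.exp_pos _).le

lemma kernel_estimate_of_nonneg {ε μ Z t : ℝ} (hε : 0 < ε) (hμ0 : 0 ≤ μ) (hZ0 : 0 ≤ Z)
    (hZ2 : Z ^ 2 = 1 + 4 * ε * μ) (ht : 0 ≤ t) :
    ((1 + |μ|) / Z ^ 2) * ∫ s in (0 : ℝ)..t, Real.exp (2 * ((1 - Z) / (2 * ε)) * (t - s)) ≤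
      t + 1 / 2 := by
  have hZ1 : 1 ≤ Z := by nlinarith [mul_nonneg hε.le hμ0]
  rw [show (1 - Z) / (2 * ε) = -((Z - 1) / (2 * ε)) by ring]
  set r := (Z - 1) / (2 * ε)
  set I := ∫ s in (0 : ℝ)..t, Real.exp (2 * -r * (t - s))
  have hr : 0 ≤ r := div_nonneg (by linarith) (by positivity)
  have hI_le_t : I ≤ t :=
    (integral_exp_mul_sub_le le_rfl (by linarith : 2 * -r ≤ 0) ht).trans_eq (by simp)
  have hr_mul_I : 2 * r * I ≤ 1 := by
    have h : -(2 * -r) * I = 1 - Real.exp (2 * -r * t) := neg_mul_integral_exp_mul_sub _ t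
    linarith [Real.exp_pos (2 * -r * t), show -(2 * -r) * I = 2 * r * I by ring]
  have hI0 : 0 ≤ I := intervalIntegral.integral_nonneg ht fun s _ => (Real.exp_pos _).le
  have hμI : 2 * μ * I ≤ Z ^ 2 := by
    nlinarith [mul_le_mul_of_nonneg_right (le_sq_mul_sub_one_div hε hZ1 hZ2) hI0]
  have ht_le : t ≤ t * Z ^ 2 := le_mul_of_one_le_right ht (by nlinarith)
  rw [abs_of_nonneg hμ0, div_mul_eq_mul_div, div_le_iff₀ (by nlinarith)]
  linarith

theorem stmt19_general (K T ε μ : ℝ) (hK : K ≤ 0) (hε : 0 < ε)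
    (hsmall : 4 * ε * |K| < 1 / 2) (hμ : K ≤ μ)
    (Z lam : ℝ) (hZ : Z = Real.sqrt (1 + 4 * ε * μ)) (hlam : lam = (1 - Z) / (2 * ε)) :
    ∀ t ∈ Set.Icc (0 : ℝ) T,
      ((1 + |μ|) / Z ^ 2) * ∫ s in (0 : ℝ)..t, Real.exp (2 * lam * (t - s)) ≤
        2 * (1 - K) * (T + 1) * Real.exp (-4 * K * T) := by
  rintro t ⟨ht0, htT⟩
  subst hlam
  have hpos : 0 ≤ 1 + 4 * ε * μ := by
    rw [abs_of_nonpos hK] at hsmall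
    nlinarith [mul_le_mul_of_nonneg_left hμ hε.le]
  have hZ0 : 0 ≤ Z := hZ ▸ Real.sqrt_nonneg _
  have hZ2 : Z ^ 2 = 1 + 4 * ε * μ := hZ ▸ Real.sq_sqrt hpos
  have hexp_t : Real.exp (-4 * K * t) ≤ Real.exp (-4 * K * T) :=
    Real.exp_le_exp.2 (by nlinarith)
  have hexp_one : 1 ≤ Real.exp (-4 * K * T) := Real.one_le_exp (by nlinarith)
  rcases le_total μ 0 with hμ0 | hμ0
  · refine (kernel_estimate_of_nonpos hK hε hsmall hμ hμ0 hZ0 hZ2 ht0).trans ?_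
    have : t * Real.exp (-4 * K * t) ≤ (T + 1) * Real.exp (-4 * K * T) :=
      mul_le_mul (by linarith) hexp_t (Real.exp_pos _).le (by linarith)
    nlinarith
  · refine (kernel_estimate_of_nonneg hε hμ0 hZ0 hZ2 ht0).trans ?_
    have : t + 1 / 2 ≤ 2 * (1 - K) * (T + 1) := by nlinarith
    nlinarith

/-- Dominating kernel estimate: for `K ≤ 0`, `T > 0`, `4ε|K| < 1/2`, `μ ≥ K`,
`Z = √(1+4εμ)` and `λ_ε = (1−Z)/(2ε)`,
`sup_{t∈[0,T]} ((1+|μ|)/Z²)∫₀^t e^{2λ_ε(t−s)} ds ≤ 2(1−K)(T+1)e^{−4KT}`. -/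
theorem stmt19 (K T ε μ : ℝ) (hK : K ≤ 0) (hT : 0 < T) (hε : 0 < ε)
    (hsmall : 4 * ε * |K| < 1 / 2) (hμ : K ≤ μ)
    (Z lam : ℝ) (hZ : Z = Real.sqrt (1 + 4 * ε * μ)) (hlam : lam = (1 - Z) / (2 * ε)) :
    ∀ t ∈ Set.Icc (0 : ℝ) T,
      ((1 + |μ|) / Z ^ 2) * ∫ s in (0 : ℝ)..t, Real.exp (2 * lam * (t - s)) ≤
        2 * (1 - K) * (T + 1) * Real.exp (-4 * K * T) :=
  stmt19_general K T ε μ hK hε hsmall hμ Z lam hZ hlam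
end
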